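/- For every x ∈ [−C_q/2, C_q/2] and every r ∈ {0,1,…,k−1}, the quantized-Gaussian pmf value is bounded below by the normalized end-cell mass at x = −C_q/2: P_x(r) ≥ (1/δ)·∫_{B(k−2)}^{B(k−1)} f_{−C_q/2}(t)·(t−B(k−2)) dt. -/

import Mathlib

open MeasureTheory Real

/-- Density of the normal distribution `N(x, σ²)`. -/
noncomputable def gpdf (σ x t : ℝ) : ℝ :=
  (1 / (σ * Real.sqrt (2 * Real.pi))) * Real.exp (-(t - x) ^ 2 / (2 * σ ^ 2))

/-- Quantization levels `B(r) = -C_q + r · δ`, with `δ = 2·C_q/(k-1)`. -/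
noncomputable def Blev (Cq : ℝ) (k : ℕ) (r : ℕ) : ℝ :=
  -Cq + (r : ℝ) * (2 * Cq / ((k : ℝ) - 1))

/-- The quantized-Gaussian pmf `P_x(r)` on `{0, 1, …, k-1}`. -/
noncomputable def qgPmf (Cq σ : ℝ) (k : ℕ) (x : ℝ) (r : ℕ) : ℝ :=
  if r = 0 then
    (∫ t in Set.Iic (Blev Cq k 0), gpdf σ x t)
      + ∫ t in (Blev Cq k 0)..(Blev Cq k 1),
          gpdf σ x t * (Blev Cq k 1 - t) / (2 * Cq / ((k : ℝ) - 1))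
  else if r = k - 1 then
    (∫ t in (Blev Cq k (k - 2))..(Blev Cq k (k - 1)),
        gpdf σ x t * (t - Blev Cq k (k - 2)) / (2 * Cq / ((k : ℝ) - 1)))
      + ∫ t in Set.Ici (Blev Cq k (k - 1)), gpdf σ x t
  else
    (∫ t in (Blev Cq k (r - 1))..(Blev Cq k r),
        gpdf σ x t * (t - Blev Cq k (r - 1)) / (2 * Cq / ((k : ℝ) - 1)))
      + ∫ t in (Blev Cq k r)..(Blev Cq k (r + 1)),
          gpdf σ x t * (Blev Cq k (r + 1) - t) / (2 * Cq / ((k : ℝ) - 1))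

/-!
Writing the ramp weight as a layer cake, `∫_a^{a+δ} f(t) (t - a) dt = ∫_0^δ ∫_{a+v}^{a+δ} f dv`,
both sides become averages over `v ∈ [0, δ]` of Gaussian masses of intervals, which are compared
for each `v` separately. For the last cell (and the first one, its mirror image) the mass of
`[a + v, a + δ]` under `N(-C_q/2, σ²)` is at most the tail mass beyond `a + v` under `N(x, σ²)`,
because `x ≥ -C_q/2`. For an inner cell with centre `c` the tent weight yields the mass of
`[c - (δ - v), c + (δ - v)]`; after centring, this interval has its midpoint at distance
`|c - x| ≤ 3C_q/2` from the origin, no farther than the interval `[C_q - (δ - v), C_q + (δ - v)]`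
containing `[C_q - (δ - v), C_q]` under `N(-C_q/2, σ²)`. A symmetric decreasing density gives
more mass to an interval of fixed length the closer its midpoint is to the origin.
-/

open Set ProbabilityTheory

section LayerCake

variable {f : ℝ → ℝ}

theorem continuous_intervalIntegral_of_continuous (hf : Continuous f) {u w : ℝ → ℝ}
    (hu : Continuous u) (hw : Continuous w) : Continuous fun v => ∫ t in u v..w v, f t := by
  have hprim :=
    intervalIntegral.continuous_primitive (fun a b => hf.intervalIntegrable (μ := volume) a b) 0
  have h : (fun v => ∫ t in u v..w v, f t) = fun v => (∫ t in 0..w v, f t) - ∫ t in 0..u v, f t :=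
    funext fun v => (intervalIntegral.integral_interval_sub_left
      (hf.intervalIntegrable _ _) (hf.intervalIntegrable _ _)).symm
  rw [h]
  exact (hprim.comp hw).sub (hprim.comp hu)

theorem integral_mul_sub_eq_integral_integral (hf : Continuous f) (a d : ℝ) :
    ∫ t in a..a + d, f t * (t - a) = ∫ v in 0..d, ∫ t in a + v..a + d, f t := by
  have hderiv (v : ℝ) : HasDerivAt (fun v => ∫ t in a + v..a + d, f t) (-f (a + v)) v :=
    (intervalIntegral.integral_hasDerivAt_left (hf.intervalIntegrable _ _)
      (hf.stronglyMeasurableAtFilter _ _) hf.continuousAt).comp_const_add a v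
  have parts := intervalIntegral.integral_mul_deriv_eq_deriv_mul
    (fun v _ => hasDerivAt_id v) (fun v _ => hderiv v) intervalIntegrable_const
    ((hf.comp (continuous_const_add a)).neg.intervalIntegrable 0 d)
  simp only [id, intervalIntegral.integral_same, mul_zero, zero_mul, sub_zero, one_mul,
    zero_sub, mul_neg, intervalIntegral.integral_neg, neg_inj] at parts
  calc _ = ∫ v in 0..d, f (a + v) * (a + v - a) := by
        rw [intervalIntegral.integral_comp_add_left (fun t => f t * (t - a)), add_zero]
    _ = _ := by simpa only [add_sub_cancel_left, mul_comm] using parts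

theorem integral_mul_const_sub_eq_integral_integral (hf : Continuous f) (a d : ℝ) :
    ∫ t in a..a + d, f t * (a + d - t) = ∫ v in 0..d, ∫ t in a..a + d - v, f t := by
  have hderiv (v : ℝ) : HasDerivAt (fun v => ∫ t in a..a + d - v, f t) (-f (a + d - v)) v :=
    (intervalIntegral.integral_hasDerivAt_right (hf.intervalIntegrable _ _)
      (hf.stronglyMeasurableAtFilter _ _) hf.continuousAt).comp_const_sub (a + d) v
  have parts := intervalIntegral.integral_mul_deriv_eq_deriv_mul
    (fun v _ => hasDerivAt_id v) (fun v _ => hderiv v) intervalIntegrable_const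
    ((hf.comp (continuous_sub_left (a + d))).neg.intervalIntegrable 0 d)
  simp only [id, add_sub_cancel_right, intervalIntegral.integral_same, mul_zero, zero_mul,
    sub_zero, one_mul, zero_sub, mul_neg, intervalIntegral.integral_neg, neg_inj] at parts
  calc _ = ∫ v in 0..d, f (a + d - v) * (a + d - (a + d - v)) := by
        rw [intervalIntegral.integral_comp_sub_left (fun t => f t * (a + d - t)), sub_zero,
          add_sub_cancel_right]
    _ = _ := by simpa only [sub_sub_cancel, mul_comm] using parts

end LayerCake

def SymmDecreasing (φ : ℝ → ℝ) : Prop :=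
  ∀ ⦃y z : ℝ⦄, |z| ≤ |y| → φ y ≤ φ z

namespace SymmDecreasing

variable {φ : ℝ → ℝ}

theorem even (hφ : SymmDecreasing φ) : Function.Even φ := fun t =>
  le_antisymm (hφ (abs_neg t).ge) (hφ (abs_neg t).le)

theorem integral_ball_eq_integral_ball_abs (hφ : SymmDecreasing φ) (m ℓ : ℝ) :
    ∫ t in m - ℓ..m + ℓ, φ t = ∫ t in |m| - ℓ..|m| + ℓ, φ t := by
  rcases abs_choice m with hm | hm
  · rw [hm]
  · have h := intervalIntegral.integral_comp_neg (a := m - ℓ) (b := m + ℓ) φ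
    simp only [hφ.even _] at h
    rw [hm, h]
    congr 1 <;> ring

theorem integral_ball_le_of_le (hφ : SymmDecreasing φ) (hφi : Continuous φ) {m m' ℓ : ℝ}
    (hm : 0 ≤ m) (hmm' : m ≤ m') (hℓ : 0 ≤ ℓ) :
    ∫ t in m' - ℓ..m' + ℓ, φ t ≤ ∫ t in m - ℓ..m + ℓ, φ t := by
  -- Sliding the interval from `m` to `m'` trades `[m - ℓ, m' - ℓ]` for its translate by `2ℓ`,
  -- which lies farther from the origin point by point.
  have hshift : ∫ t in m + ℓ..m' + ℓ, φ t ≤ ∫ t in m - ℓ..m' - ℓ, φ t := by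
    rw [show m + ℓ = m - ℓ + 2 * ℓ by ring, show m' + ℓ = m' - ℓ + 2 * ℓ by ring,
      ← intervalIntegral.integral_comp_add_right]
    refine intervalIntegral.integral_mono_on (by linarith)
      ((hφi.comp (continuous_add_const _)).intervalIntegrable _ _) (hφi.intervalIntegrable _ _)
      fun t ht => hφ ?_
    rw [abs_of_nonneg (by linarith [ht.1] : 0 ≤ t + 2 * ℓ)]
    exact abs_le.2 ⟨by linarith [ht.1], by linarith⟩
  have hdiff := intervalIntegral.integral_interval_sub_interval_comm (μ := volume)
    (hφi.intervalIntegrable (m - ℓ) (m + ℓ)) (hφi.intervalIntegrable (m' - ℓ) (m' + ℓ))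
    (hφi.intervalIntegrable (m - ℓ) (m' - ℓ))
  linarith

theorem integral_ball_le_of_abs_le (hφ : SymmDecreasing φ) (hφi : Continuous φ) {m m' ℓ : ℝ}
    (hmm' : |m| ≤ |m'|) (hℓ : 0 ≤ ℓ) :
    ∫ t in m' - ℓ..m' + ℓ, φ t ≤ ∫ t in m - ℓ..m + ℓ, φ t := by
  rw [hφ.integral_ball_eq_integral_ball_abs m, hφ.integral_ball_eq_integral_ball_abs m']
  exact hφ.integral_ball_le_of_le hφi (abs_nonneg m) hmm' hℓ

end SymmDecreasing

section Gaussian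

variable {σ : ℝ}

theorem continuous_gpdf (σ x : ℝ) : Continuous (gpdf σ x) := by
  unfold gpdf; fun_prop

theorem gpdf_nonneg (hσ : 0 ≤ σ) (x t : ℝ) : 0 ≤ gpdf σ x t := by
  unfold gpdf; positivity

theorem gpdf_eq_gaussianPDFReal (hσ : 0 ≤ σ) (x : ℝ) :
    gpdf σ x = gaussianPDFReal x (σ ^ 2).toNNReal := by
  ext t
  rw [gpdf, gaussianPDFReal, Real.coe_toNNReal _ (sq_nonneg σ),
    Real.sqrt_mul' (2 * π) (sq_nonneg σ), Real.sqrt_sq hσ, one_div, mul_comm σ]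

theorem integrable_gpdf (hσ : 0 ≤ σ) (x : ℝ) : Integrable (gpdf σ x) := by
  rw [gpdf_eq_gaussianPDFReal hσ]
  exact integrable_gaussianPDFReal _ _

theorem gpdf_zero_sub (σ x t : ℝ) : gpdf σ 0 (t - x) = gpdf σ x t := by
  simp only [gpdf, sub_zero]

theorem gpdf_neg (σ x t : ℝ) : gpdf σ x (-t) = gpdf σ (-x) t := by
  simp only [gpdf]; ring_nf

theorem symmDecreasing_gpdf (hσ : 0 ≤ σ) : SymmDecreasing (gpdf σ 0) := by
  intro y z hyz
  simp only [gpdf, sub_zero]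
  gcongr _ * exp (-?_ / _)
  exact sq_le_sq.2 hyz

theorem integral_gpdf_eq_integral_gpdf_zero (σ x p q : ℝ) :
    ∫ t in p..q, gpdf σ x t = ∫ t in p - x..q - x, gpdf σ 0 t := by
  simp only [← intervalIntegral.integral_comp_sub_right (gpdf σ 0) x, gpdf_zero_sub]

theorem integral_Ioi_gpdf_eq_integral_Ioi_gpdf_zero (σ x p : ℝ) :
    ∫ t in Ioi p, gpdf σ x t = ∫ t in Ioi (p - x), gpdf σ 0 t := by
  rw [← integral_indicator measurableSet_Ioi, ← integral_indicator measurableSet_Ioi,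
    ← integral_sub_right_eq_self (fun t => (Ioi (p - x)).indicator (gpdf σ 0) t) x]
  congr 1
  ext t
  simp [indicator, gpdf_zero_sub]

theorem integral_Ioi_gpdf_mono (hσ : 0 ≤ σ) {x' x : ℝ} (hx : x' ≤ x) (p : ℝ) :
    ∫ t in Ioi p, gpdf σ x' t ≤ ∫ t in Ioi p, gpdf σ x t := by
  rw [integral_Ioi_gpdf_eq_integral_Ioi_gpdf_zero σ x',
    integral_Ioi_gpdf_eq_integral_Ioi_gpdf_zero σ x]
  exact setIntegral_mono_set (integrable_gpdf hσ 0).integrableOn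
    (ae_of_all _ (gpdf_nonneg hσ 0)) (Ioi_subset_Ioi (by linarith)).eventuallyLE

theorem integral_gpdf_le_integral_gpdf_add_integral_Ioi (hσ : 0 ≤ σ) {x' x : ℝ} (hx : x' ≤ x)
    (p q : ℝ) :
    ∫ t in p..q, gpdf σ x' t ≤ (∫ t in p..q, gpdf σ x t) + ∫ t in Ioi q, gpdf σ x t := by
  have hIoi (x) := (integrable_gpdf hσ x).integrableOn (s := Ioi p)
  rw [← intervalIntegral.integral_Ioi_sub_Ioi' (hIoi x') (integrable_gpdf hσ x').integrableOn,
    intervalIntegral.integral_interval_add_Ioi (hIoi x) (integrable_gpdf hσ x).integrableOn]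
  have htail : 0 ≤ ∫ t in Ioi q, gpdf σ x' t :=
    setIntegral_nonneg measurableSet_Ioi fun t _ => gpdf_nonneg hσ x' t
  linarith [integral_Ioi_gpdf_mono hσ hx p]

theorem integral_gpdf_le_integral_gpdf_ball (hσ : 0 ≤ σ) {x' x p c ℓ : ℝ}
    (hc : |c - x| ≤ |p - x'|) (hℓ : 0 ≤ ℓ) :
    ∫ t in p - ℓ..p, gpdf σ x' t ≤ ∫ t in c - ℓ..c + ℓ, gpdf σ x t := by
  calc ∫ t in p - ℓ..p, gpdf σ x' t ≤ ∫ t in p - ℓ..p + ℓ, gpdf σ x' t :=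
        intervalIntegral.integral_mono_interval le_rfl (by linarith) (by linarith)
          (ae_of_all _ (gpdf_nonneg hσ x')) ((continuous_gpdf σ x').intervalIntegrable _ _)
    _ = ∫ t in (p - x') - ℓ..(p - x') + ℓ, gpdf σ 0 t := by
        rw [integral_gpdf_eq_integral_gpdf_zero]; congr 1 <;> ring
    _ ≤ ∫ t in (c - x) - ℓ..(c - x) + ℓ, gpdf σ 0 t :=
        (symmDecreasing_gpdf hσ).integral_ball_le_of_abs_le (continuous_gpdf σ 0) hc hℓ
    _ = ∫ t in c - ℓ..c + ℓ, gpdf σ x t := by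
        rw [integral_gpdf_eq_integral_gpdf_zero σ x]; congr 1 <;> ring

end Gaussian

section Cells

variable {σ x' x : ℝ}

theorem ramp_mass_le_end_cell_mass (hσ : 0 ≤ σ) (hx : x' ≤ x) {a d : ℝ} (hd : 0 < d) :
    1 / d * ∫ t in a..a + d, gpdf σ x' t * (t - a) ≤
      (∫ t in a..a + d, gpdf σ x t * (t - a) / d) + ∫ t in Ici (a + d), gpdf σ x t := by
  have hcont (y : ℝ) := continuous_intervalIntegral_of_continuous (continuous_gpdf σ y)
    (continuous_const_add a) (continuous_const (y := a + d))
  rw [intervalIntegral.integral_div, integral_Ici_eq_integral_Ioi,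
    integral_mul_sub_eq_integral_integral (continuous_gpdf σ x'),
    integral_mul_sub_eq_integral_integral (continuous_gpdf σ x)]
  have key : ∫ v in 0..d, ∫ t in a + v..a + d, gpdf σ x' t ≤
      ∫ v in 0..d, ((∫ t in a + v..a + d, gpdf σ x t) + ∫ t in Ioi (a + d), gpdf σ x t) :=
    intervalIntegral.integral_mono_on hd.le ((hcont x').intervalIntegrable _ _)
      (((hcont x).add continuous_const).intervalIntegrable _ _)
      fun v _ => integral_gpdf_le_integral_gpdf_add_integral_Ioi hσ hx _ _
  rw [intervalIntegral.integral_add ((hcont x).intervalIntegrable _ _) intervalIntegrable_const,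
    intervalIntegral.integral_const, smul_eq_mul, sub_zero] at key
  calc _ ≤ 1 / d * ((∫ v in 0..d, ∫ t in a + v..a + d, gpdf σ x t) +
          d * ∫ t in Ioi (a + d), gpdf σ x t) := by gcongr
    _ = _ := by field_simp

theorem ramp_mass_le_inner_cell_mass (hσ : 0 ≤ σ) {a l d : ℝ} (hd : 0 < d)
    (hl : |l + d - x| ≤ |a + d - x'|) :
    1 / d * ∫ t in a..a + d, gpdf σ x' t * (t - a) ≤
      (∫ t in l..l + d, gpdf σ x t * (t - l) / d) +
        ∫ t in l + d..l + d + d, gpdf σ x t * (l + d + d - t) / d := by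
  have hcont (y b : ℝ) := continuous_intervalIntegral_of_continuous (continuous_gpdf σ y)
    (continuous_const_add b) (continuous_const (y := b + d))
  have hcont' := continuous_intervalIntegral_of_continuous (continuous_gpdf σ x)
    (continuous_const (y := l + d)) (continuous_sub_left (l + d + d))
  rw [intervalIntegral.integral_div, intervalIntegral.integral_div,
    integral_mul_sub_eq_integral_integral (continuous_gpdf σ x'),
    integral_mul_sub_eq_integral_integral (continuous_gpdf σ x),
    integral_mul_const_sub_eq_integral_integral (continuous_gpdf σ x)]
  have key : ∫ v in 0..d, ∫ t in a + v..a + d, gpdf σ x' t ≤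
      ∫ v in 0..d,
        ((∫ t in l + v..l + d, gpdf σ x t) + ∫ t in l + d..l + d + d - v, gpdf σ x t) := by
    refine intervalIntegral.integral_mono_on hd.le ((hcont x' a).intervalIntegrable _ _)
      (((hcont x l).add hcont').intervalIntegrable _ _) fun v hv => ?_
    rw [intervalIntegral.integral_add_adjacent_intervals
      ((continuous_gpdf σ x).intervalIntegrable _ _) ((continuous_gpdf σ x).intervalIntegrable _ _)]
    have h := integral_gpdf_le_integral_gpdf_ball hσ hl (sub_nonneg.2 hv.2)
    convert h using 2 <;> ring
  rw [intervalIntegral.integral_add ((hcont x l).intervalIntegrable _ _)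
    (hcont'.intervalIntegrable _ _)] at key
  calc _ ≤ 1 / d * ((∫ v in 0..d, ∫ t in l + v..l + d, gpdf σ x t) +
          ∫ v in 0..d, ∫ t in l + d..l + d + d - v, gpdf σ x t) := by gcongr
    _ = _ := by ring

end Cells

section Grid

variable {Cq : ℝ} {k : ℕ}

theorem Blev_succ (Cq : ℝ) (k r : ℕ) :
    Blev Cq k (r + 1) = Blev Cq k r + 2 * Cq / ((k : ℝ) - 1) := by
  unfold Blev; push_cast; ring

theorem Blev_sub_one (hk : 2 ≤ k) : Blev Cq k (k - 1) = Cq := by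
  have hk1 : (k : ℝ) - 1 ≠ 0 := by
    rw [sub_ne_zero]; exact_mod_cast (by omega : k ≠ 1)
  unfold Blev
  rw [Nat.cast_sub (by omega), Nat.cast_one]
  field_simp
  ring

theorem Blev_sub_one_eq_Blev_sub_two_add (hk : 2 ≤ k) :
    Blev Cq k (k - 1) = Blev Cq k (k - 2) + 2 * Cq / ((k : ℝ) - 1) := by
  rw [← Blev_succ]; congr 1; omega

theorem abs_Blev_le (hC : 0 ≤ Cq) (hk : 2 ≤ k) {r : ℕ} (hr : r < k) :
    |Blev Cq k r| ≤ Cq := by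
  have hk1 : (0 : ℝ) < (k : ℝ) - 1 := by
    rw [sub_pos]; exact_mod_cast (by omega : 1 < k)
  have hrk : (r : ℝ) ≤ (k : ℝ) - 1 := by
    rw [le_sub_iff_add_le]; exact_mod_cast (by omega : r + 1 ≤ k)
  have hstep : (r : ℝ) * (2 * Cq / ((k : ℝ) - 1)) ≤ 2 * Cq := by
    rw [mul_div_assoc', div_le_iff₀ hk1]; nlinarith
  unfold Blev
  rw [abs_le]
  constructor <;>
    nlinarith [r.cast_nonneg (α := ℝ), div_nonneg (by linarith : 0 ≤ 2 * Cq) hk1.le]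

theorem qgPmf_zero_eq_qgPmf_neg_sub_one (σ x : ℝ) (hk : 2 ≤ k) :
    qgPmf Cq σ k x 0 = qgPmf Cq σ k (-x) (k - 1) := by
  have hB0 : Blev Cq k 0 = -Blev Cq k (k - 1) := by
    rw [Blev_sub_one hk]; simp [Blev]
  have hB1 : Blev Cq k 1 = -Blev Cq k (k - 2) := by
    have h := Blev_sub_one_eq_Blev_sub_two_add (Cq := Cq) hk
    rw [Blev_sub_one hk] at h
    rw [← zero_add 1, Blev_succ, hB0, Blev_sub_one hk]
    linarith
  rw [qgPmf, qgPmf, if_pos rfl, if_neg (by omega), if_pos rfl, hB0, hB1, add_comm]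
  congr 1
  · rw [← intervalIntegral.integral_comp_neg]
    simp only [gpdf_neg]
    congr 1; ext t; ring
  · have h := integral_comp_neg_Iic (-Blev Cq k (k - 1)) (gpdf σ (-x))
    simp only [gpdf_neg, neg_neg] at h
    rw [integral_Ici_eq_integral_Ioi, h]

end Grid

/-- For every `x ∈ [-C_q/2, C_q/2]` and every `r ∈ {0, …, k-1}`, the quantized-Gaussian
pmf value is bounded below by the normalized end-cell mass at the input `-C_q/2`. -/
theorem quantGauss_pmf_lower_bound (Cq σ : ℝ) (hC : 0 < Cq) (hσ : 0 < σ)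
    (k : ℕ) (hk : 2 ≤ k) (x : ℝ) (hx : x ∈ Set.Icc (-(Cq / 2)) (Cq / 2))
    (r : ℕ) (hr : r < k) :
    qgPmf Cq σ k x r ≥
      (1 / (2 * Cq / ((k : ℝ) - 1))) *
        ∫ t in (Blev Cq k (k - 2))..(Blev Cq k (k - 1)),
          gpdf σ (-(Cq / 2)) t * (t - Blev Cq k (k - 2)) := by
  obtain ⟨hx₁, hx₂⟩ := hx
  have hd : 0 < 2 * Cq / ((k : ℝ) - 1) :=
    div_pos (by linarith) (by rw [sub_pos]; exact_mod_cast (by omega : 1 < k))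
  have hlast := Blev_sub_one_eq_Blev_sub_two_add (Cq := Cq) hk
  rw [ge_iff_le, hlast]
  rcases Nat.eq_zero_or_pos r with rfl | hr₀
  · rw [qgPmf_zero_eq_qgPmf_neg_sub_one σ x hk, qgPmf, if_neg (by omega), if_pos rfl, hlast]
    exact ramp_mass_le_end_cell_mass hσ.le (by linarith) hd
  rcases eq_or_ne r (k - 1) with rfl | hrk
  · rw [qgPmf, if_neg (by omega), if_pos rfl, hlast]
    exact ramp_mass_le_end_cell_mass hσ.le hx₁ hd
  obtain ⟨m, rfl⟩ : ∃ m, r = m + 1 := ⟨r - 1, by omega⟩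
  have hBr := abs_Blev_le hC.le hk (r := m + 1) (by omega)
  rw [Blev_succ] at hBr
  rw [qgPmf, if_neg (by omega), if_neg hrk, Nat.add_sub_cancel, Blev_succ Cq k (m + 1),
    Blev_succ Cq k m]
  refine ramp_mass_le_inner_cell_mass hσ.le hd ?_
  rw [← hlast, Blev_sub_one hk, abs_of_pos (by linarith : 0 < Cq - -(Cq / 2))]
  calc |Blev Cq k m + 2 * Cq / ((k : ℝ) - 1) - x|
      ≤ |Blev Cq k m + 2 * Cq / ((k : ℝ) - 1)| + |x| := abs_sub _ _
    _ ≤ Cq - -(Cq / 2) := by linarith [abs_le.2 ⟨hx₁, hx₂⟩]
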